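/- Let M, H be d×d max-plus matrices with λ(H) ≤ 0, and suppose m ≥ d+1 and n ≥ d+1. With A and B the first components of (M,H)^m and (M,H)^n respectively, the keys satisfy K_a = A ⊕ B ⊕ H^{∘m} ⊕ (B ⊗ H^{∘m}) = A ⊕ B = (M ⊕ H) ⊗ H*. -/

import Mathlib

open Finset

abbrev Rmax : Type := WithBot ℝ

/-- Tropical (max-plus) matrix product. -/
noncomputable def trMul {l m n : ℕ} (A : Matrix (Fin l) (Fin m) Rmax) (B : Matrix (Fin m) (Fin n) Rmax) :
    Matrix (Fin l) (Fin n) Rmax :=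
  fun i j => univ.sup fun k => A i k + B k j

/-- Entrywise tropical sum (max) of matrices. -/
noncomputable def trSup {m n : ℕ} (A B : Matrix (Fin m) (Fin n) Rmax) : Matrix (Fin m) (Fin n) Rmax :=
  fun i j => A i j ⊔ B i j

/-- Tropical identity matrix. -/
noncomputable def trId (d : ℕ) : Matrix (Fin d) (Fin d) Rmax := fun i j => if i = j then 0 else ⊥

/-- Tropical matrix powers, `trPow A 0 = I`. -/
noncomputable def trPow {d : ℕ} (A : Matrix (Fin d) (Fin d) Rmax) : ℕ → Matrix (Fin d) (Fin d) Rmax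
  | 0 => trId d
  | n + 1 => trMul (trPow A n) A

/-- Adjoint product `A ∘ B = A ⊕ B ⊕ (A ⊗ B)`. -/
noncomputable def adj {d : ℕ} (A B : Matrix (Fin d) (Fin d) Rmax) : Matrix (Fin d) (Fin d) Rmax :=
  trSup (trSup A B) (trMul A B)

/-- Adjoint powers: `adjPow A n = A^{∘n}` for `n ≥ 1` (value at 0 is junk `A`). -/
noncomputable def adjPow {d : ℕ} (A : Matrix (Fin d) (Fin d) Rmax) : ℕ → Matrix (Fin d) (Fin d) Rmax
  | 0 => A
  | 1 => A
  | n + 2 => adj (adjPow A (n + 1)) A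

/-- Semidirect product of pairs:
`(M,G)·(A,H) = (M ⊕ A ⊕ H ⊕ (M ⊗ H), G ∘ H)`. -/
noncomputable def sd {d : ℕ} (p q : Matrix (Fin d) (Fin d) Rmax × Matrix (Fin d) (Fin d) Rmax) :
    Matrix (Fin d) (Fin d) Rmax × Matrix (Fin d) (Fin d) Rmax :=
  (trSup (trSup (trSup p.1 q.1) q.2) (trMul p.1 q.2), adj p.2 q.2)

/-- Semidirect powers: `sdPow p n = p^n` for `n ≥ 1` (value at 0 is junk `p`). -/
noncomputable def sdPow {d : ℕ} (p : Matrix (Fin d) (Fin d) Rmax × Matrix (Fin d) (Fin d) Rmax) :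
    ℕ → Matrix (Fin d) (Fin d) Rmax × Matrix (Fin d) (Fin d) Rmax
  | 0 => p
  | 1 => p
  | n + 2 => sd (sdPow p (n + 1)) p

/-- Maximum cycle mean `λ(F)`: maximum over cycles `(c 0, c 1, …, c k, c 0)` of
the average arc weight. -/
noncomputable def mcm {d : ℕ} (F : Matrix (Fin d) (Fin d) Rmax) : Rmax :=
  univ.sup fun kc : Σ k : Fin d, Fin (k.1 + 1) → Fin d =>
    (∑ i, F (kc.2 i) (kc.2 (i + 1))).map fun w => w / ((kc.1 : ℕ) + 1)

/-- Metric matrix `A⁺ = A ⊕ A^{⊗2} ⊕ ⋯ ⊕ A^{⊗d}`. -/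
noncomputable def metric {d : ℕ} (A : Matrix (Fin d) (Fin d) Rmax) : Matrix (Fin d) (Fin d) Rmax :=
  fun i j => (Finset.Icc 1 d).sup fun k => trPow A k i j

/-- Kleene star `A* = I ⊕ A ⊕ ⋯ ⊕ A^{⊗(d-1)}`. -/
noncomputable def kstar {d : ℕ} (A : Matrix (Fin d) (Fin d) Rmax) : Matrix (Fin d) (Fin d) Rmax :=
  fun i j => (Finset.range d).sup fun k => trPow A k i j

/-- `F` is irreducible: its weighted digraph is strongly connected. -/
def TrIrreducible {d : ℕ} (F : Matrix (Fin d) (Fin d) Rmax) : Prop :=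
  ∀ i j : Fin d, Relation.ReflTransGen (fun a b => F a b ≠ ⊥) i j

/-!
Write `E = (M ⊕ H) ⊗ H*`. Because `λ(H) ≤ 0`, an optimal walk of length `k ≥ d` contains a cycle
of length at most `d` and nonpositive weight, and cutting it out shows `H^{⊗k} ≤ H*` for all `k`;
hence `H* ⊗ H ≤ H*` and `E ⊗ H ≤ E`. Since also `M, H ≤ E`, induction bounds every first
component of `(M, H)^k`, every `H^{∘k}` and every `E ⊗ H^{∘k}` by `E`. Conversely the first
component of `(M, H)^k` grows with `k` and contains `(M ⊕ H) ⊗ H^{⊗r}` for `r ≤ k - 2`, so it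
equals `E` once `k ≥ d + 1`.
-/

namespace WithBot

variable {α ι : Type*} [LinearOrder α] [Add α]

theorem add_finset_sup [AddLeftMono α] (s : Finset ι) (f : ι → WithBot α) (a : WithBot α) :
    a + s.sup f = s.sup fun i => a + f i := by
  induction s using Finset.cons_induction with
  | empty => simp
  | cons b s hb ih => rw [Finset.sup_cons, Finset.sup_cons, ← ih, max_add_add_left]

theorem finset_sup_add [AddRightMono α] (s : Finset ι) (f : ι → WithBot α) (a : WithBot α) :
    s.sup f + a = s.sup fun i => f i + a := by
  induction s using Finset.cons_induction with
  | empty => simp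
  | cons b s hb ih => rw [Finset.sup_cons, Finset.sup_cons, ← ih, max_add_add_right]

end WithBot

instance {m n : ℕ} : SemilatticeSup (Matrix (Fin m) (Fin n) Rmax) :=
  inferInstanceAs (SemilatticeSup (Fin m → Fin n → Rmax))

section TropicalAlgebra

variable {d : ℕ} {A B C A' B' : Matrix (Fin d) (Fin d) Rmax}

theorem trSup_eq_sup (A B : Matrix (Fin d) (Fin d) Rmax) : trSup A B = A ⊔ B := rfl

theorem matrix_le_def : A ≤ B ↔ ∀ i j, A i j ≤ B i j := Iff.rfl

theorem le_trMul (A B : Matrix (Fin d) (Fin d) Rmax) (i k j : Fin d) :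
    A i k + B k j ≤ trMul A B i j :=
  Finset.le_sup (f := fun k => A i k + B k j) (mem_univ k)

theorem trMul_le_iff : trMul A B ≤ C ↔ ∀ i k j, A i k + B k j ≤ C i j := by
  simp only [matrix_le_def, trMul, Finset.sup_le_iff, mem_univ, true_implies]
  exact forall_congr' fun i => forall_comm

@[gcongr]
theorem trMul_mono (hA : A ≤ A') (hB : B ≤ B') : trMul A B ≤ trMul A' B' :=
  trMul_le_iff.2 fun i k j => (add_le_add (hA i k) (hB k j)).trans (le_trMul A' B' i k j)

theorem trMul_sup_left (A B C : Matrix (Fin d) (Fin d) Rmax) :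
    trMul A (B ⊔ C) = trMul A B ⊔ trMul A C := by
  funext i j
  show (univ.sup fun k => A i k + (B k j ⊔ C k j)) =
    (univ.sup fun k => A i k + B k j) ⊔ (univ.sup fun k => A i k + C k j)
  simp only [← max_add_add_left]
  exact Finset.sup_sup

theorem trMul_assoc (A B C : Matrix (Fin d) (Fin d) Rmax) :
    trMul (trMul A B) C = trMul A (trMul B C) := by
  funext i j
  show (univ.sup fun u => (univ.sup fun k => A i k + B k u) + C u j) =
    univ.sup fun k => A i k + univ.sup fun u => B k u + C u j
  simp only [WithBot.finset_sup_add, WithBot.add_finset_sup, add_assoc]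
  exact Finset.sup_comm _ _ _

theorem trMul_trId (A : Matrix (Fin d) (Fin d) Rmax) : trMul A (trId d) = A := by
  funext i j
  refine le_antisymm (Finset.sup_le fun k _ => ?_) (by simpa [trId] using le_trMul A (trId d) i j j)
  by_cases h : k = j <;> simp [trId, h]

theorem trId_trMul (A : Matrix (Fin d) (Fin d) Rmax) : trMul (trId d) A = A := by
  funext i j
  refine le_antisymm (Finset.sup_le fun k _ => ?_) (by simpa [trId] using le_trMul (trId d) A i i j)
  by_cases h : i = k <;> simp [trId, h]

theorem trPow_one (H : Matrix (Fin d) (Fin d) Rmax) : trPow H 1 = H := trId_trMul H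

theorem trPow_add (H : Matrix (Fin d) (Fin d) Rmax) (a b : ℕ) :
    trPow H (a + b) = trMul (trPow H a) (trPow H b) := by
  induction b with
  | zero => exact (trMul_trId _).symm
  | succ b ih => rw [← add_assoc, trPow, ih, trMul_assoc, trPow]

theorem trPow_add_le (H : Matrix (Fin d) (Fin d) Rmax) (a b : ℕ) (i k j : Fin d) :
    trPow H a i k + trPow H b k j ≤ trPow H (a + b) i j :=
  trPow_add H a b ▸ le_trMul _ _ i k j

end TropicalAlgebra

section Walks

variable {d : ℕ} (H : Matrix (Fin d) (Fin d) Rmax)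

noncomputable def walkWeight (c : ℕ → Fin d) (a b : ℕ) : Rmax :=
  ∑ t ∈ Ico a b, H (c t) (c (t + 1))

theorem walkWeight_add (c : ℕ → Fin d) {a b e : ℕ} (hab : a ≤ b) (hbe : b ≤ e) :
    walkWeight H c a b + walkWeight H c b e = walkWeight H c a e :=
  Finset.sum_Ico_consecutive _ hab hbe

theorem walkWeight_le_trPow (c : ℕ → Fin d) {a b : ℕ} (hab : a ≤ b) :
    walkWeight H c a b ≤ trPow H (b - a) (c a) (c b) := by
  induction b, hab using Nat.le_induction with
  | base => simp [walkWeight, trPow, trId]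
  | succ b hab ih =>
    rw [walkWeight, Finset.sum_Ico_succ_top hab, Nat.sub_add_comm hab]
    exact (add_le_add_left ih _).trans (le_trMul _ _ _ _ _)

theorem exists_trPow_le_walkWeight (k : ℕ) (i j : Fin d) :
    ∃ c : ℕ → Fin d, c 0 = i ∧ c (k + 1) = j ∧ trPow H (k + 1) i j ≤ walkWeight H c 0 (k + 1) := by
  induction k generalizing j with
  | zero => exact ⟨fun t => if t = 0 then i else j, rfl, rfl, by simp [walkWeight, trPow_one]⟩
  | succ k ih =>
    obtain ⟨u, -, hu⟩ := Finset.exists_mem_eq_sup univ ⟨i, mem_univ i⟩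
      fun u => trPow H (k + 1) i u + H u j
    obtain ⟨c, hc0, hcu, hc⟩ := ih u
    refine ⟨Function.update c (k + 2) j, by simp [hc0], by simp, ?_⟩
    have hprefix : walkWeight H (Function.update c (k + 2) j) 0 (k + 1) = walkWeight H c 0 (k + 1) :=
      Finset.sum_congr rfl fun t ht => by
        rw [mem_Ico] at ht
        rw [Function.update_of_ne (by omega), Function.update_of_ne (by omega)]
    rw [walkWeight, Finset.sum_Ico_succ_top (by omega), ← walkWeight, hprefix,
      Function.update_self, Function.update_of_ne (by omega), hcu]
    exact hu.trans_le (add_le_add_left hc _)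

variable {H}

theorem walkWeight_nonpos_of_mcm_nonpos (hH : mcm H ≤ 0) (c : ℕ → Fin d) {p q : ℕ}
    (hpq : p < q) (hqd : q ≤ p + d) (hc : c p = c q) : walkWeight H c p q ≤ 0 := by
  obtain ⟨r, rfl⟩ : ∃ r, q = p + r + 1 := ⟨q - p - 1, by omega⟩
  have hmean := (Finset.le_sup (f := fun kc : Σ k : Fin d, Fin (k.1 + 1) → Fin d =>
      (∑ i, H (kc.2 i) (kc.2 (i + 1))).map fun w : ℝ => w / ((kc.1 : ℕ) + 1))
    (mem_univ ⟨⟨r, by omega⟩, fun i => c (p + i)⟩)).trans hH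
  have hcycle : ∑ i : Fin (r + 1), H (c (p + i)) (c (p + ↑(i + 1))) = walkWeight H c p (p + r + 1) := by
    have hnext (i : Fin (r + 1)) : c (p + ↑(i + 1)) = c (p + i + 1) := by
      rw [Fin.val_add_one]
      split_ifs with hi
      · rw [hi, Fin.val_last, add_zero, hc]
      · rfl
    simp only [hnext, walkWeight, Finset.sum_Ico_eq_sum_range, add_assoc p r 1,
      Nat.add_sub_cancel_left]
    exact Fin.sum_univ_eq_sum_range (fun t => H (c (p + t)) (c (p + t + 1))) (r + 1)
  have hpos : (0 : ℝ) < r + 1 := by positivity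
  rw [← hcycle, ← WithBot.map_le_iff (fun w : ℝ => w / (r + 1)) (div_le_div_iff_of_pos_right hpos)]
  simpa using hmean

end Walks

theorem exists_lt_le_map_eq {d : ℕ} (c : ℕ → Fin d) : ∃ p q, p < q ∧ q ≤ d ∧ c p = c q := by
  obtain ⟨x, hx, y, hy, hxy, hc⟩ := Finset.exists_ne_map_eq_of_card_lt_of_maps_to
    (s := range (d + 1)) (t := univ) (by simp) (f := c) fun _ _ => mem_coe.2 (mem_univ _)
  rw [mem_range] at hx hy
  rcases hxy.lt_or_gt with h | h
  · exact ⟨x, y, h, by omega, hc⟩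
  · exact ⟨y, x, h, by omega, hc.symm⟩

section KleeneStar

variable {d : ℕ} {H : Matrix (Fin d) (Fin d) Rmax}

theorem trPow_le_kstar (hH : mcm H ≤ 0) (k : ℕ) : trPow H k ≤ kstar H := by
  induction k using Nat.strong_induction_on with
  | _ k ih =>
  intro i j
  by_cases hkd : k < d
  · exact Finset.le_sup (f := fun r => trPow H r i j) (mem_range.2 hkd)
  obtain ⟨k, rfl⟩ : ∃ k', k = k' + 1 := ⟨k - 1, by have := i.pos; omega⟩
  obtain ⟨c, rfl, rfl, hc⟩ := exists_trPow_le_walkWeight H k i j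
  obtain ⟨p, q, hpq, hqd, hcyc⟩ := exists_lt_le_map_eq c
  calc trPow H (k + 1) (c 0) (c (k + 1))
      ≤ walkWeight H c 0 p + walkWeight H c p q + walkWeight H c q (k + 1) := by
        rwa [walkWeight_add H c (by omega) hpq.le, walkWeight_add H c (by omega) (by omega)]
    _ ≤ trPow H (p - 0) (c 0) (c p) + 0 + trPow H (k + 1 - q) (c q) (c (k + 1)) := by
        gcongr
        · exact walkWeight_le_trPow H c (Nat.zero_le p)
        · exact walkWeight_nonpos_of_mcm_nonpos hH c hpq (by omega) hcyc
        · exact walkWeight_le_trPow H c (by omega)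
    _ ≤ trPow H (p + (k + 1 - q)) (c 0) (c (k + 1)) := by
        rw [add_zero, Nat.sub_zero, hcyc]
        exact trPow_add_le H _ _ _ _ _
    _ ≤ kstar H (c 0) (c (k + 1)) := ih _ (by omega) _ _

theorem kstar_trMul_le (hH : mcm H ≤ 0) : trMul (kstar H) H ≤ kstar H :=
  trMul_le_iff.2 fun i u j => by
    rw [kstar, WithBot.finset_sup_add, Finset.sup_le_iff]
    exact fun r _ => (le_trMul _ _ i u j).trans (trPow_le_kstar hH (r + 1) i j)

theorem le_trMul_kstar (A : Matrix (Fin d) (Fin d) Rmax) : A ≤ trMul A (kstar H) := by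
  intro i j
  have hdiag : trPow H 0 j j ≤ kstar H j j := Finset.le_sup (f := fun r => trPow H r j j) (mem_range.2 j.pos)
  simpa [trPow, trId] using (add_le_add le_rfl hdiag).trans (le_trMul _ _ i j j)

theorem trMul_kstar_le {C X : Matrix (Fin d) (Fin d) Rmax}
    (h : ∀ r < d, trMul C (trPow H r) ≤ X) : trMul C (kstar H) ≤ X :=
  trMul_le_iff.2 fun i u j => by
    rw [kstar, WithBot.add_finset_sup, Finset.sup_le_iff]
    exact fun r hr => (le_trMul _ _ i u j).trans (h r (mem_range.1 hr) i j)

end KleeneStar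

section Semidirect

variable {d : ℕ} {M H E : Matrix (Fin d) (Fin d) Rmax}

theorem sdPow_fst_add_two (M H : Matrix (Fin d) (Fin d) Rmax) (k : ℕ) :
    (sdPow (M, H) (k + 2)).1 =
      (sdPow (M, H) (k + 1)).1 ⊔ M ⊔ H ⊔ trMul (sdPow (M, H) (k + 1)).1 H := rfl

theorem adjPow_add_two (H : Matrix (Fin d) (Fin d) Rmax) (k : ℕ) :
    adjPow H (k + 2) = adjPow H (k + 1) ⊔ H ⊔ trMul (adjPow H (k + 1)) H := rfl

theorem sdPow_fst_le (hM : M ≤ E) (hH : H ≤ E) (hE : trMul E H ≤ E) (k : ℕ) :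
    (sdPow (M, H) k).1 ≤ E := by
  induction k using Nat.twoStepInduction with
  | zero => exact hM
  | one => exact hM
  | more k _ ih =>
    rw [sdPow_fst_add_two]
    exact sup_le (sup_le (sup_le ih hM) hH) ((trMul_mono ih le_rfl).trans hE)

theorem adjPow_le (hH : H ≤ E) (hE : trMul E H ≤ E) (k : ℕ) : adjPow H k ≤ E := by
  induction k using Nat.twoStepInduction with
  | zero => exact hH
  | one => exact hH
  | more k _ ih =>
    rw [adjPow_add_two]
    exact sup_le (sup_le ih hH) ((trMul_mono ih le_rfl).trans hE)

theorem trMul_adjPow_le (hE : trMul E H ≤ E) (k : ℕ) : trMul E (adjPow H k) ≤ E := by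
  induction k using Nat.twoStepInduction with
  | zero => exact hE
  | one => exact hE
  | more k _ ih =>
    rw [adjPow_add_two, trMul_sup_left, trMul_sup_left, ← trMul_assoc]
    exact sup_le (sup_le ih hE) ((trMul_mono ih le_rfl).trans hE)

theorem sdPow_fst_le_succ (M H : Matrix (Fin d) (Fin d) Rmax) (k : ℕ) :
    (sdPow (M, H) (k + 1)).1 ≤ (sdPow (M, H) (k + 2)).1 := by
  rw [sdPow_fst_add_two]
  exact le_sup_left.trans (le_sup_left.trans le_sup_left)

theorem trMul_sup_trPow_le_sdPow_fst (M H : Matrix (Fin d) (Fin d) Rmax) (r : ℕ) :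
    trMul (M ⊔ H) (trPow H r) ≤ (sdPow (M, H) (r + 2)).1 := by
  induction r with
  | zero =>
    rw [trPow, trMul_trId, sdPow_fst_add_two]
    exact sup_le (le_sup_right.trans (le_sup_left.trans le_sup_left)) (le_sup_right.trans le_sup_left)
  | succ r ih =>
    rw [trPow, ← trMul_assoc, sdPow_fst_add_two]
    exact (trMul_mono ih le_rfl).trans le_sup_right

theorem trMul_kstar_trMul_le (hH : mcm H ≤ 0) (C : Matrix (Fin d) (Fin d) Rmax) :
    trMul (trMul C (kstar H)) H ≤ trMul C (kstar H) := by
  rw [trMul_assoc]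
  exact trMul_mono le_rfl (kstar_trMul_le hH)

theorem sdPow_fst_eq (hH : mcm H ≤ 0) {k : ℕ} (hk : d + 1 ≤ k) :
    (sdPow (M, H) k).1 = trMul (M ⊔ H) (kstar H) := by
  refine le_antisymm (sdPow_fst_le (le_sup_left.trans (le_trMul_kstar _))
    (le_sup_right.trans (le_trMul_kstar _)) (trMul_kstar_trMul_le hH _) k) (trMul_kstar_le fun r hr => ?_)
  obtain ⟨k, rfl⟩ : ∃ k', k = k' + 1 := ⟨k - 1, by omega⟩
  exact (trMul_sup_trPow_le_sdPow_fst M H r).trans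
    (monotone_nat_of_le_succ (sdPow_fst_le_succ M H) (by omega : r + 1 ≤ k))

end Semidirect

theorem key_of_mcm_nonpos {d : ℕ} (M H : Matrix (Fin d) (Fin d) Rmax)
    (hH : mcm H ≤ 0) (m n : ℕ) (hm : d + 1 ≤ m) (hn : d + 1 ≤ n)
    (A B : Matrix (Fin d) (Fin d) Rmax)
    (hA : A = (sdPow (M, H) m).1) (hB : B = (sdPow (M, H) n).1) :
    trSup (trSup (trSup A B) (adjPow H m)) (trMul B (adjPow H m)) = trSup A B ∧
      trSup A B = trMul (trSup M H) (kstar H) := by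
  subst hA hB
  simp only [trSup_eq_sup, sdPow_fst_eq hH hm, sdPow_fst_eq hH hn, sup_idem, and_true]
  have hE := trMul_kstar_trMul_le hH (M ⊔ H)
  rw [sup_eq_left.2 (adjPow_le (le_sup_right.trans (le_trMul_kstar _)) hE m),
    sup_eq_left.2 (trMul_adjPow_le hE m)]
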